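/- arXiv:1008.1661 — 2 statements merged into one kernel-verified Lean document; each statement's English description precedes it below -/
import Mathlib

section
/- Kleene star lower bound witness: let m ≥ 2 and, over the alphabet {a,b}, let L = { b a^{k(m-1)} : k ≥ 0 }. Then L is suffix-free, NSC(L) = m, and NSC(L*) = m. -/
/-!
With `n = m - 1`, both `L` and `L∗` are recognised by automata on the states `none` (start) and
`some j`, `j : Fin n`: the letter `b` enters an `a`-cycle of length `n` at `some 0`; for `L∗` the
state `some 0` may also read `b` to start the next factor, and the start state accepts `ε`.

For the lower bounds, both `L` and `L∗` contain `b a^t` exactly when `n ∣ t` and contain no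
nonempty word `a^s`. Hence the pairs `(ε, b)` and `(b a^i, a^(n-i))`, `i < n`, form an extended
fooling set of size `n + 1`: distinct pairs must be separated by distinct states of any NFA.
-/

open Computability

/-- A nondeterministic finite automaton with a single start state and
no ε-transitions. -/
structure SNFA (α : Type) (σ : Type) where
  step : σ → α → Set σ
  start : σ
  accept : Set σ

namespace SNFA

variable {α σ : Type}

/-- The set of states reachable from some state in `S` by one transition on `a`. -/
def stepSet (M : SNFA α σ) (S : Set σ) (a : α) : Set σ :=
  ⋃ s ∈ S, M.step s a

/-- The set of states reachable from the set `S` of states by reading the word `w`. -/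
def evalFrom (M : SNFA α σ) (S : Set σ) (w : List α) : Set σ :=
  w.foldl M.stepSet S

/-- The language accepted by `M`: all words spelled out by a path
from the start state to an accepting state. -/
def accepts (M : SNFA α σ) : Language α :=
  {w | ∃ q ∈ M.accept, q ∈ M.evalFrom {M.start} w}

end SNFA

/-- A language is suffix-free if no word of the language is a proper suffix
of another word of the language. -/
def SuffixFree {α : Type} (L : Language α) : Prop :=
  ∀ u v : List α, u ∈ L → v ∈ L → u <:+ v → u = v

/-- `NSCle L k`: there is an NFA with at most `k` states accepting `L`
(so the nondeterministic state complexity of `L` is at most `k`). -/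
def NSCle {α : Type} (L : Language α) (k : ℕ) : Prop :=
  ∃ (σ : Type) (x : Fintype σ) (M : SNFA α σ), M.accepts = L ∧ @Fintype.card σ x ≤ k

/-- `NSCge L k`: every NFA accepting `L` has at least `k` states
(so the nondeterministic state complexity of `L` is at least `k`). -/
def NSCge {α : Type} (L : Language α) (k : ℕ) : Prop :=
  ∀ (σ : Type) [Fintype σ] (M : SNFA α σ), M.accepts = L → k ≤ Fintype.card σ

/-- `NSCeq L m`: the nondeterministic state complexity of `L` is exactly `m`:
some NFA with `m` states accepts `L` and every NFA accepting `L` has at least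
`m` states. -/
def NSCeq {α : Type} (L : Language α) (m : ℕ) : Prop :=
  NSCle L m ∧ NSCge L m

/-- The language `b(a^{m-1})*` over `{a, b}` (encoded as `a = 0`, `b = 1`). -/
def starLang (m : ℕ) : Language (Fin 2) :=
  {w | ∃ k : ℕ, w = 1 :: List.replicate (k * (m - 1)) 0}

open List

namespace SNFA

variable {α σ : Type} (M : SNFA α σ)

@[simp]
theorem mem_stepSet {S : Set σ} {a : α} {q : σ} :
    q ∈ M.stepSet S a ↔ ∃ p ∈ S, q ∈ M.step p a := by
  simp [stepSet]

@[simp]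
theorem stepSet_singleton (p : σ) (a : α) : M.stepSet {p} a = M.step p a := by
  simp [stepSet]

theorem evalFrom_cons (S : Set σ) (a : α) (w : List α) :
    M.evalFrom S (a :: w) = M.evalFrom (M.stepSet S a) w := rfl

theorem evalFrom_append (S : Set σ) (u v : List α) :
    M.evalFrom S (u ++ v) = M.evalFrom (M.evalFrom S u) v :=
  foldl_append

theorem evalFrom_append_singleton (S : Set σ) (w : List α) (a : α) :
    M.evalFrom S (w ++ [a]) = M.stepSet (M.evalFrom S w) a :=
  M.evalFrom_append S w [a]

theorem evalFrom_mono {S T : Set σ} (h : S ⊆ T) (w : List α) :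
    M.evalFrom S w ⊆ M.evalFrom T w := by
  induction w generalizing S T with
  | nil => exact h
  | cons a w ih => exact ih (Set.biUnion_subset_biUnion_left h)

theorem exists_mem_of_mem_evalFrom {S : Set σ} {w : List α} {q : σ}
    (h : q ∈ M.evalFrom S w) : ∃ p ∈ S, q ∈ M.evalFrom {p} w := by
  induction w generalizing S with
  | nil => exact ⟨q, h, rfl⟩
  | cons a w ih =>
    obtain ⟨p', hp', hq⟩ := ih h
    obtain ⟨p, hp, hp'⟩ := M.mem_stepSet.1 hp'
    refine ⟨p, hp, ?_⟩
    rw [evalFrom_cons, stepSet_singleton]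
    exact M.evalFrom_mono (Set.singleton_subset_iff.2 hp') w hq

theorem append_mem_accepts_iff {u v : List α} :
    u ++ v ∈ M.accepts ↔
      ∃ p ∈ M.evalFrom {M.start} u, ∃ q ∈ M.accept, q ∈ M.evalFrom {p} v := by
  constructor
  · rintro ⟨q, hq, hquv⟩
    rw [evalFrom_append] at hquv
    obtain ⟨p, hp, hpq⟩ := M.exists_mem_of_mem_evalFrom hquv
    exact ⟨p, hp, q, hq, hpq⟩
  · rintro ⟨p, hp, q, hq, hpq⟩
    refine ⟨q, hq, ?_⟩
    rw [evalFrom_append]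
    exact M.evalFrom_mono (Set.singleton_subset_iff.2 hp) v hpq

theorem mem_of_mem_evalFrom_start (P : σ → Set (List α)) (hstart : [] ∈ P M.start)
    (hstep : ∀ p a q w, q ∈ M.step p a → w ∈ P p → w ++ [a] ∈ P q)
    {w : List α} {q : σ} (h : q ∈ M.evalFrom {M.start} w) : w ∈ P q := by
  induction w using reverseRecOn generalizing q with
  | nil => exact (Set.mem_singleton_iff.1 h) ▸ hstart
  | append_singleton w a ih =>
    obtain ⟨p, hp, hq⟩ := (M.mem_stepSet).1 (M.evalFrom_append_singleton _ w a ▸ h)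
    exact hstep p a q w hq (ih hp)

open Fin.NatCast in
theorem evalFrom_replicate_of_step_eq {n : ℕ} [NeZero n] (M : SNFA α (Option (Fin n))) {a : α}
    (ha : ∀ j, M.step (some j) a = {some (j + 1)}) (j : Fin n) (t : ℕ) :
    M.evalFrom {some j} (replicate t a) = {some (j + t)} := by
  induction t generalizing j with
  | zero => simp [evalFrom]
  | succ t ih =>
    rw [replicate_succ, evalFrom_cons, stepSet_singleton, ha, ih, Nat.cast_succ, add_right_comm,
      add_assoc]

open Fin.NatCast in
theorem evalFrom_cons_replicate_of_step_eq {n : ℕ} [NeZero n] (M : SNFA α (Option (Fin n)))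
    {a b : α} (ha : ∀ j, M.step (some j) a = {some (j + 1)}) {p : Option (Fin n)}
    (hb : M.step p b = {some 0}) (t : ℕ) :
    M.evalFrom {p} (b :: replicate t a) = {some (t : Fin n)} := by
  rw [evalFrom_cons, stepSet_singleton, hb, M.evalFrom_replicate_of_step_eq ha, zero_add]

end SNFA

theorem nscge_of_fooling {α : Type} {L : Language α} {k : ℕ} (u v : Fin k → List α)
    (hmem : ∀ i, u i ++ v i ∈ L)
    (hcross : ∀ i j, i ≠ j → u i ++ v j ∉ L ∨ u j ++ v i ∉ L) :
    NSCge L k := by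
  intro σ _ M hM
  subst hM
  choose p hp q hq hpq using fun i => M.append_mem_accepts_iff.1 (hmem i)
  have glue : ∀ i j, p i = p j → u i ++ v j ∈ M.accepts := fun i j h =>
    M.append_mem_accepts_iff.2 ⟨p i, hp i, q j, hq j, h ▸ hpq j⟩
  have hinj : Function.Injective p := fun i j h => by
    by_contra hne
    rcases hcross i j hne with h' | h'
    exacts [h' (glue i j h), h' (glue j i h.symm)]
  simpa using Fintype.card_le_of_injective p hinj

section starLang

variable {m : ℕ}

theorem suffixFree_starLang : SuffixFree (starLang m) := by
  rintro u v ⟨k, rfl⟩ ⟨l, rfl⟩ ⟨_ | ⟨c, t⟩, ht⟩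
  · simpa using ht
  · have h1 : (1 : Fin 2) ∈ replicate (l * (m - 1)) 0 := by
      simp only [cons_append, cons.injEq] at ht
      simp [← ht.2]
    simp at h1

theorem cons_replicate_mem_starLang {n t : ℕ} :
    (1 :: replicate t 0 : List (Fin 2)) ∈ starLang (n + 1) ↔ n ∣ t := by
  refine ⟨fun ⟨k, hk⟩ => ⟨k, ?_⟩, fun ⟨k, hk⟩ => ⟨k, by simp [hk, mul_comm]⟩⟩
  simpa [mul_comm] using congrArg length hk

theorem eq_nil_or_exists_eq_one_cons_of_mem_kstar {w : List (Fin 2)} (h : w ∈ (starLang m)∗) :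
    w = [] ∨ ∃ w', w = 1 :: w' := by
  rw [← Language.one_add_self_mul_kstar_eq_kstar, Language.mem_add, Language.mem_one,
    Language.mem_mul] at h
  rcases h with h | ⟨_, ⟨k, rfl⟩, y, -, rfl⟩
  · exact .inl h
  · exact .inr ⟨_, rfl⟩

theorem replicate_not_mem_kstar {s : ℕ} (hs : s ≠ 0) :
    (replicate s 0 : List (Fin 2)) ∉ (starLang m)∗ := by
  intro h
  obtain ⟨s, rfl⟩ := Nat.exists_eq_succ_of_ne_zero hs
  rcases eq_nil_or_exists_eq_one_cons_of_mem_kstar h with h | ⟨w, h⟩ <;>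
    simp [replicate_succ] at h

theorem cons_replicate_mem_kstar {n t : ℕ} :
    (1 :: replicate t 0 : List (Fin 2)) ∈ (starLang (n + 1))∗ ↔ n ∣ t := by
  refine ⟨fun h => ?_, fun h => (le_kstar : starLang _ ≤ _) (cons_replicate_mem_starLang.2 h)⟩
  rw [← Language.one_add_self_mul_kstar_eq_kstar, Language.mem_add, Language.mem_one,
    Language.mem_mul] at h
  rcases h with h | ⟨_, ⟨k, rfl⟩, y, hy, hxy⟩
  · simp at h
  · rcases eq_nil_or_exists_eq_one_cons_of_mem_kstar hy with rfl | ⟨y, rfl⟩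
    · simp at hxy
      exact ⟨k, by rw [← hxy, mul_comm]⟩
    · have h1 : (1 : Fin 2) ∈ replicate t 0 := by
        simp only [cons_append, cons.injEq] at hxy
        simp [← hxy.2]
      simp at h1

theorem append_cons_replicate_mem_kstar {n t : ℕ} {u : List (Fin 2)}
    (hu : u ∈ (starLang (n + 1))∗) (ht : n ∣ t) :
    u ++ 1 :: replicate t 0 ∈ (starLang (n + 1))∗ :=
  (kstar_mul_le_kstar : (starLang (n + 1))∗ * starLang (n + 1) ≤ _)
    (Language.append_mem_mul hu (cons_replicate_mem_starLang.2 ht))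

end starLang

theorem nscge_succ_of_cons_replicate_mem_iff {n : ℕ} {L : Language (Fin 2)}
    (hb : ∀ t, (1 :: replicate t 0 : List (Fin 2)) ∈ L ↔ n ∣ t)
    (ha : ∀ s, s ≠ 0 → (replicate s 0 : List (Fin 2)) ∉ L) : NSCge L (n + 1) := by
  refine nscge_of_fooling (Fin.cons [] fun i : Fin n => 1 :: replicate i 0)
    (Fin.cons [1] fun i : Fin n => replicate (n - i) 0) ?_ ?_
  · intro i
    cases i using Fin.cases with
    | zero => simpa using (hb 0).2 (dvd_zero n)
    | succ i => simpa using (hb n).2 dvd_rfl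
  · intro i j hij
    cases i using Fin.cases with
    | zero =>
      cases j using Fin.cases with
      | zero => exact absurd rfl hij
      | succ j => exact .inl (by simpa using ha _ (by omega))
    | succ i =>
      cases j using Fin.cases with
      | zero => exact .inr (by simpa using ha _ (by omega))
      | succ j =>
        refine .inl ?_
        suffices ¬ n ∣ i + (n - j) by simpa [hb]
        intro hdvd
        have := Nat.eq_of_dvd_of_lt_two_mul (by omega) hdvd (by omega)
        exact hij (by ext; simp; omega)

section Automata

open Fin.NatCast

variable (n : ℕ) [NeZero n]

def starLangNFA : SNFA (Fin 2) (Option (Fin n)) where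
  step
    | none, c => if c = 1 then {some 0} else ∅
    | some j, c => if c = 0 then {some (j + 1)} else ∅
  start := none
  accept := {some 0}

def starLangKstarNFA : SNFA (Fin 2) (Option (Fin n)) where
  step
    | none, c => if c = 1 then {some 0} else ∅
    | some j, c => if c = 0 then {some (j + 1)} else if j = 0 then {some 0} else ∅
  start := none
  accept := {none, some 0}

variable {n}

theorem starLangNFA_accepts : (starLangNFA n).accepts = starLang (n + 1) := by
  ext w
  constructor
  · rintro ⟨q, hq, hw⟩
    have key := (starLangNFA n).mem_of_mem_evalFrom_start
      (fun q => q.elim {[]} fun j => {w | ∃ t : ℕ, w = 1 :: replicate t 0 ∧ (t : Fin n) = j})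
      rfl ?_ hw
    · obtain rfl : q = some 0 := hq
      obtain ⟨t, rfl, ht⟩ := key
      exact cons_replicate_mem_starLang.2 (Fin.natCast_eq_zero.1 ht)
    rintro (_ | j) c q w hq hw <;> fin_cases c <;> simp [starLangNFA] at hq hw <;> subst hq
    · exact ⟨0, by simp [hw]⟩
    · obtain ⟨t, rfl, rfl⟩ := hw
      exact ⟨t + 1, by simp [replicate_succ'], by push_cast; rfl⟩
  · rintro ⟨k, rfl⟩
    refine ⟨some 0, rfl, ?_⟩
    rw [SNFA.evalFrom_cons_replicate_of_step_eq _ (by simp [starLangNFA]) (by simp [starLangNFA])]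
    simpa using (Fin.natCast_eq_zero.2 (dvd_mul_left n k)).symm

theorem starLangKstarNFA_accepts_le : (starLangKstarNFA n).accepts ≤ (starLang (n + 1))∗ := by
  rintro w ⟨q, hq, hw⟩
  have key := (starLangKstarNFA n).mem_of_mem_evalFrom_start
    (fun q => q.elim {[]} fun j =>
      {w | ∃ u ∈ (starLang (n + 1))∗, ∃ t : ℕ,
        w = u ++ 1 :: replicate t 0 ∧ (t : Fin n) = j})
    rfl ?_ hw
  · rcases hq with rfl | rfl
    · obtain rfl : w = [] := key
      exact Language.nil_mem_kstar _
    · obtain ⟨u, hu, t, rfl, ht⟩ := key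
      exact append_cons_replicate_mem_kstar hu (Fin.natCast_eq_zero.1 ht)
  rintro (_ | j) c q w hq hw <;> fin_cases c <;> simp [starLangKstarNFA] at hq hw
  · subst hq hw
    exact ⟨[], Language.nil_mem_kstar _, 0, by simp⟩
  · obtain ⟨u, hu, t, rfl, rfl⟩ := hw
    subst hq
    exact ⟨u, hu, t + 1, by simp [replicate_succ'], by push_cast; rfl⟩
  · obtain ⟨rfl, rfl⟩ := hq
    obtain ⟨u, hu, t, rfl, ht⟩ := hw
    exact ⟨_, append_cons_replicate_mem_kstar hu (Fin.natCast_eq_zero.1 ht), 0, by simp⟩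

theorem kstar_le_starLangKstarNFA_accepts :
    (starLang (n + 1))∗ ≤ (starLangKstarNFA n).accepts := by
  refine kstar_le_of_mul_le_left (fun w hw => ⟨none, Or.inl rfl, hw ▸ rfl⟩) ?_
  rintro _ ⟨u, ⟨q, hq, hqu⟩, x, ⟨k, rfl⟩, rfl⟩
  have h1 : (starLangKstarNFA n).step q 1 = {some 0} := by
    rcases hq with rfl | rfl <;> simp [starLangKstarNFA]
  have h0 : ∀ j : Fin n, (starLangKstarNFA n).step (some j) 0 = {some (j + 1)} := by
    simp [starLangKstarNFA]
  refine (starLangKstarNFA n).append_mem_accepts_iff.2 ⟨q, hqu, some 0, Or.inr rfl, ?_⟩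
  rw [SNFA.evalFrom_cons_replicate_of_step_eq _ h0 h1]
  simpa using (Fin.natCast_eq_zero.2 (dvd_mul_left n k)).symm

theorem starLangKstarNFA_accepts : (starLangKstarNFA n).accepts = (starLang (n + 1))∗ :=
  le_antisymm starLangKstarNFA_accepts_le kstar_le_starLangKstarNFA_accepts

end Automata

/-- **Kleene star, lower bound witness.** For `m ≥ 2`, the language
`L = b(a^{m-1})*` over `{a, b}` is suffix-free, `NSC(L) = m`, and
`NSC(L∗) = m`. -/
theorem kstar_lower_witness (m : ℕ) (hm : 2 ≤ m) :
    SuffixFree (starLang m) ∧ NSCeq (starLang m) m ∧ NSCeq ((starLang m)∗) m := by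
  obtain ⟨n, rfl⟩ : ∃ n, m = n + 1 := ⟨m - 1, by omega⟩
  have : NeZero n := ⟨by omega⟩
  refine ⟨suffixFree_starLang, ⟨?_, ?_⟩, ⟨?_, ?_⟩⟩
  · exact ⟨Option (Fin n), inferInstance, starLangNFA n, starLangNFA_accepts, by simp⟩
  · exact nscge_succ_of_cons_replicate_mem_iff (fun _ => cons_replicate_mem_starLang)
      fun _ hs h => replicate_not_mem_kstar hs ((le_kstar : starLang (n + 1) ≤ _) h)
  · exact ⟨Option (Fin n), inferInstance, starLangKstarNFA n, starLangKstarNFA_accepts,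
      by simp⟩
  · exact nscge_succ_of_cons_replicate_mem_iff (fun _ => cons_replicate_mem_kstar)
      fun _ => replicate_not_mem_kstar
end

section
/- Complementation lower bound: for every m ≥ 2 there exists a suffix-free regular language L over the alphabet {a,b,c} such that NSC(L) ≤ m and NSC({a,b,c}* \ L) ≥ 2^{m−1} − 1, i.e., every NFA accepting the complement of L has at least 2^{m−1} − 1 states. -/
open Computability

/-!
Put `n = m - 1`. The witness is `c·K`, where `K` is accepted from state `0` of an `n`-cycle on
`ZMod n` in which `a` rotates the cycle (keeping an extra loop at `0`) and `b` kills state `0`;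
the single leading `c`, read from a fresh start state, makes the language suffix-free.
The closure of `{0}` under the two induced set operations is all of `Set (ZMod n)`, so every
subset `S` is reached by some word `u_S`. Reversing the cycle and negating states gives back the
same automaton, so for every `T` some word `y_T` is accepted exactly from the states outside `T`.
Hence `c u_S y_T` lies in the complement iff `S ⊆ T`, and the pairs `(c u_S, y_S)` form an
extended fooling set of size `2 ^ n` for the complement.
-/

namespace SNFA

variable {α σ : Type}

def toNFA (M : SNFA α σ) : NFA α σ where
  step := M.step
  start := {M.start}
  accept := M.accept

theorem accepts_toNFA (M : SNFA α σ) : M.toNFA.accepts = M.accepts := rfl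

end SNFA

theorem NFA.mem_acceptsFrom_iff_exists {α σ : Type} {M : NFA α σ} {S : Set σ} {x : List α} :
    x ∈ M.acceptsFrom S ↔ ∃ s ∈ S, x ∈ M.acceptsFrom {s} := by
  simp only [NFA.mem_acceptsFrom, NFA.mem_evalFrom_iff_exists (S := S)]
  tauto

theorem NFA.acceptsFrom_empty {α σ : Type} (M : NFA α σ) : M.acceptsFrom ∅ = 0 := by
  ext x
  rw [NFA.mem_acceptsFrom_iff_exists]
  simp

theorem NFA.card_le_of_fooling {α σ ι : Type} [Fintype σ] [Fintype ι] (M : NFA α σ)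
    (x y : ι → List α) (hmem : ∀ i, x i ++ y i ∈ M.accepts)
    (hsep : ∀ i j, x i ++ y j ∈ M.accepts → x j ++ y i ∈ M.accepts → i = j) :
    Fintype.card ι ≤ Fintype.card σ := by
  have hstate (i : ι) : ∃ q ∈ M.evalFrom M.start (x i), y i ∈ M.acceptsFrom {q} := by
    have := hmem i
    rwa [NFA.accepts_eq_acceptsFrom_start, NFA.append_mem_acceptsFrom,
      NFA.mem_acceptsFrom_iff_exists] at this
  choose q hqx hqy using hstate
  refine Fintype.card_le_of_injective q fun i j hij => hsep i j ?_ ?_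
  all_goals
    rw [NFA.accepts_eq_acceptsFrom_start, NFA.append_mem_acceptsFrom,
      NFA.mem_acceptsFrom_iff_exists]
  · exact ⟨q i, hqx i, hij ▸ hqy j⟩
  · exact ⟨q j, hqx j, hij ▸ hqy i⟩

theorem NSCge_of_fooling {α ι : Type} [Fintype ι] {L : Language α} (x y : ι → List α)
    (hmem : ∀ i, x i ++ y i ∈ L)
    (hsep : ∀ i j, x i ++ y j ∈ L → x j ++ y i ∈ L → i = j) :
    NSCge L (Fintype.card ι) := by
  intro σ _ M hM
  rw [← M.accepts_toNFA] at hM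
  subst hM
  exact M.toNFA.card_le_of_fooling x y hmem hsep

theorem NSCge.mono {α : Type} {L : Language α} {j k : ℕ} (h : NSCge L k) (hjk : j ≤ k) :
    NSCge L j :=
  fun σ _ M hM => hjk.trans (h σ M hM)

namespace ZMod

variable {n : ℕ}

def cycleShift (X : Set (ZMod n)) : Set (ZMod n) := (· + 1) '' X ∪ X ∩ {0}

structure CycleClosed (P : Set (ZMod n) → Prop) : Prop where
  singleton_zero : P {0}
  cycleShift : ∀ X, P X → P (cycleShift X)
  diff_zero : ∀ X, P X → P (X \ {0})

namespace CycleClosed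

variable {P : Set (ZMod n) → Prop}

theorem image_add_one (hP : CycleClosed P) {X : Set (ZMod n)} (hX : P X) :
    P ((· + 1) '' X) := by
  by_cases h : 0 ∈ X ∧ 0 ∉ (· + 1) '' X
  · convert hP.diff_zero _ (hP.cycleShift X hX) using 1
    rw [ZMod.cycleShift, Set.union_sdiff_distrib, Set.sdiff_singleton_eq_self h.2,
      Set.sdiff_eq_empty.2 Set.inter_subset_right, Set.union_empty]
  · convert hP.cycleShift X hX using 1
    rw [ZMod.cycleShift, eq_comm, Set.union_eq_left]
    rintro x ⟨hxX, rfl⟩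
    by_contra h'
    exact h ⟨hxX, h'⟩

theorem image_add [NeZero n] (hP : CycleClosed P) {X : Set (ZMod n)} (hX : P X) (d : ZMod n) :
    P ((· + d) '' X) := by
  rw [← ZMod.natCast_zmod_val d]
  induction d.val with
  | zero => simpa using hX
  | succ k ih =>
    convert hP.image_add_one ih using 1
    rw [Set.image_image]
    push_cast
    simp only [add_assoc]

theorem diff_singleton [NeZero n] (hP : CycleClosed P) {X : Set (ZMod n)} (hX : P X)
    (a : ZMod n) : P (X \ {a}) := by
  convert hP.image_add (hP.diff_zero _ (hP.image_add hX (-a))) a using 1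
  ext x
  simp [Set.image_add_right]

theorem natCast_image_Iic (hP : CycleClosed P) (k : ℕ) :
    P (Nat.cast '' Set.Iic k) := by
  induction k with
  | zero =>
    convert hP.singleton_zero
    ext x
    simp [eq_comm]
  | succ k ih =>
    convert hP.cycleShift _ ih using 1
    ext x
    simp only [ZMod.cycleShift, Set.mem_image, Set.mem_Iic, Set.mem_union, Set.mem_inter_iff,
      Set.mem_singleton_iff]
    constructor
    · rintro ⟨_ | i, hi, rfl⟩
      · exact Or.inr ⟨⟨0, k.zero_le, rfl⟩, Nat.cast_zero⟩
      · exact Or.inl ⟨i, ⟨i, by omega, rfl⟩, by push_cast; rfl⟩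
    · rintro (⟨_, ⟨i, hi, rfl⟩, rfl⟩ | ⟨hx, rfl⟩)
      · exact ⟨i + 1, by omega, by push_cast; rfl⟩
      · exact ⟨0, (k + 1).zero_le, Nat.cast_zero⟩

theorem univ [NeZero n] (hP : CycleClosed P) : P Set.univ := by
  convert hP.natCast_image_Iic (n - 1)
  refine (Set.eq_univ_of_forall fun x => ?_).symm
  exact ⟨x.val, Set.mem_Iic.2 (by have := x.val_lt; omega), ZMod.natCast_zmod_val x⟩

theorem forall_set [NeZero n] (hP : CycleClosed P) (X : Set (ZMod n)) : P X := by
  rw [← compl_compl X]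
  induction Xᶜ, Xᶜ.toFinite using Set.Finite.induction_on with
  | empty => simpa using hP.univ
  | @insert a D _ _ ih =>
    rw [Set.insert_eq, Set.compl_union, ← Set.sdiff_eq_compl_inter]
    exact hP.diff_singleton ih a

end CycleClosed

end ZMod

open ZMod Pointwise

-- The letters `0, 1, 2` of `Fin 3` are `a, b, c`; `none` is the fresh start state.
def cycleNFA (n : ℕ) : SNFA (Fin 3) (Option (ZMod n)) where
  step
    | none, c => if c = 2 then {some 0} else ∅
    | some s, c =>
      if c = 0 then {some (s + 1)} ∪ (if s = 0 then {some 0} else ∅)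
      else if c = 1 then (if s = 0 then ∅ else {some s})
      else ∅
  start := none
  accept := {some 0}

namespace cycleNFA

variable {n : ℕ}

theorem start_toNFA : (cycleNFA n).toNFA.start = {none} := rfl

theorem step_none (c : Fin 3) :
    (cycleNFA n).toNFA.step none c = if c = 2 then {some 0} else ∅ := rfl

theorem step_some_zero (s : ZMod n) :
    (cycleNFA n).toNFA.step (some s) 0 = {some (s + 1)} ∪ (if s = 0 then {some 0} else ∅) := rfl

theorem step_some_one (s : ZMod n) :
    (cycleNFA n).toNFA.step (some s) 1 = if s = 0 then ∅ else {some s} := rfl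

theorem step_some_two (s : ZMod n) : (cycleNFA n).toNFA.step (some s) 2 = ∅ := rfl

theorem stepSet_image_some_zero (X : Set (ZMod n)) :
    (cycleNFA n).toNFA.stepSet (some '' X) 0 = some '' cycleShift X := by
  ext q
  simp only [NFA.mem_stepSet, Set.mem_image, exists_exists_and_eq_and, step_some_zero,
    cycleShift]
  constructor
  · rintro ⟨s, hs, hq⟩
    split_ifs at hq with h0 <;> simp at hq
    · rcases hq with rfl | rfl
      · exact ⟨0, Or.inr ⟨h0 ▸ hs, rfl⟩, rfl⟩
      · exact ⟨s + 1, Or.inl ⟨s, hs, rfl⟩, rfl⟩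
    · exact ⟨s + 1, Or.inl ⟨s, hs, rfl⟩, hq.symm⟩
  · rintro ⟨_, ⟨s, hs, rfl⟩ | ⟨hs, rfl : _ = (0 : ZMod n)⟩, rfl⟩
    · exact ⟨s, hs, by simp⟩
    · exact ⟨0, hs, by simp⟩

theorem stepSet_image_some_one (X : Set (ZMod n)) :
    (cycleNFA n).toNFA.stepSet (some '' X) 1 = some '' (X \ {0}) := by
  ext q
  simp only [NFA.mem_stepSet, Set.mem_image, exists_exists_and_eq_and, step_some_one]
  constructor
  · rintro ⟨s, hs, hq⟩
    split_ifs at hq with h0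
    · exact absurd hq (Set.notMem_empty q)
    · exact ⟨s, ⟨hs, h0⟩, hq.symm⟩
  · rintro ⟨s, ⟨hs, h0⟩, rfl⟩
    exact ⟨s, hs, by simp_all⟩

theorem cons_zero_mem_acceptsFrom (q : ZMod n) (y : List (Fin 3)) :
    0 :: y ∈ (cycleNFA n).toNFA.acceptsFrom {some q} ↔
      y ∈ (cycleNFA n).toNFA.acceptsFrom {some (q + 1)} ∨
        q = 0 ∧ y ∈ (cycleNFA n).toNFA.acceptsFrom {some 0} := by
  rw [NFA.cons_mem_acceptsFrom, NFA.stepSet_singleton, NFA.mem_acceptsFrom_iff_exists,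
    step_some_zero]
  by_cases hq : q = 0 <;> simp [hq, or_comm]

theorem cons_one_mem_acceptsFrom (q : ZMod n) (y : List (Fin 3)) :
    1 :: y ∈ (cycleNFA n).toNFA.acceptsFrom {some q} ↔
      q ≠ 0 ∧ y ∈ (cycleNFA n).toNFA.acceptsFrom {some q} := by
  rw [NFA.cons_mem_acceptsFrom, NFA.stepSet_singleton, NFA.mem_acceptsFrom_iff_exists,
    step_some_one]
  by_cases hq : q = 0 <;> simp [hq]

theorem stepSet_image_some_two (X : Set (ZMod n)) :
    (cycleNFA n).toNFA.stepSet (some '' X) 2 = ∅ := by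
  simp [NFA.stepSet, step_some_two]

theorem cycleClosed_reachable : CycleClosed fun X : Set (ZMod n) =>
    ∃ u, (cycleNFA n).toNFA.evalFrom {some 0} u = some '' X where
  singleton_zero := ⟨[], by simp⟩
  cycleShift X := fun ⟨u, hu⟩ => ⟨u ++ [0], by
    rw [NFA.evalFrom_append, hu, NFA.evalFrom_singleton, stepSet_image_some_zero]⟩
  diff_zero X := fun ⟨u, hu⟩ => ⟨u ++ [1], by
    rw [NFA.evalFrom_append, hu, NFA.evalFrom_singleton, stepSet_image_some_one]⟩

theorem cycleClosed_coreachable : CycleClosed fun X : Set (ZMod n) =>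
    ∃ y, {q | y ∈ (cycleNFA n).toNFA.acceptsFrom {some q}} = -X where
  singleton_zero := ⟨[], by ext q; simp [NFA.nil_mem_acceptsFrom, cycleNFA, SNFA.toNFA]⟩
  cycleShift X := fun ⟨y, hy⟩ => ⟨0 :: y, by
    have hy' (p : ZMod n) := Set.ext_iff.1 hy p
    ext q
    simp only [Set.mem_ofPred_eq, Set.mem_neg, cons_zero_mem_acceptsFrom] at hy' ⊢
    by_cases hq : q = 0 <;> simp [hy', cycleShift, Set.image_add_right, hq, add_comm]⟩
  diff_zero X := fun ⟨y, hy⟩ => ⟨1 :: y, by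
    have hy' (p : ZMod n) := Set.ext_iff.1 hy p
    ext q
    simp only [Set.mem_ofPred_eq, Set.mem_neg, cons_one_mem_acceptsFrom] at hy' ⊢
    simp [hy', and_comm]⟩

theorem notMem_acceptsFrom_image_some {v : List (Fin 3)} (hv : 2 ∈ v) (X : Set (ZMod n)) :
    v ∉ (cycleNFA n).toNFA.acceptsFrom (some '' X) := by
  induction v generalizing X with
  | nil => simp at hv
  | cons c v ih =>
    rw [NFA.cons_mem_acceptsFrom]
    match c with
    | 0 =>
      rw [stepSet_image_some_zero]
      exact ih (by simpa using hv) _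
    | 1 =>
      rw [stepSet_image_some_one]
      exact ih (by simpa using hv) _
    | 2 => simp [stepSet_image_some_two, NFA.acceptsFrom_empty]

theorem eq_two_cons_of_mem_accepts {w : List (Fin 3)} (hw : w ∈ (cycleNFA n).accepts) :
    ∃ v, w = 2 :: v ∧ 2 ∉ v := by
  rw [← SNFA.accepts_toNFA, NFA.accepts_eq_acceptsFrom_start] at hw
  rcases w with _ | ⟨c, v⟩
  · simp [cycleNFA, SNFA.toNFA] at hw
  · rw [NFA.cons_mem_acceptsFrom, start_toNFA, NFA.stepSet_singleton, step_none] at hw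
    split_ifs at hw with hc
    · subst hc
      refine ⟨v, rfl, fun hv => notMem_acceptsFrom_image_some hv ({0} : Set (ZMod n)) ?_⟩
      simpa using hw
    · simp [NFA.acceptsFrom_empty] at hw

theorem suffixFree_accepts : SuffixFree (cycleNFA n).accepts := by
  intro u v hu hv ⟨t, htv⟩
  obtain ⟨u', rfl, -⟩ := eq_two_cons_of_mem_accepts hu
  obtain ⟨v', rfl, hv'⟩ := eq_two_cons_of_mem_accepts hv
  rcases t with _ | ⟨c, t⟩
  · exact htv
  · obtain ⟨-, rfl⟩ := List.cons_eq_cons.1 htv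
    exact absurd (List.mem_append_right t List.mem_cons_self) hv'

theorem two_cons_append_notMem_accepts {S T : Set (ZMod n)} {u y : List (Fin 3)}
    (hu : (cycleNFA n).toNFA.evalFrom {some 0} u = some '' S)
    (hy : {q | y ∈ (cycleNFA n).toNFA.acceptsFrom {some q}} = Tᶜ) :
    2 :: u ++ y ∉ (cycleNFA n).accepts ↔ S ⊆ T := by
  rw [← SNFA.accepts_toNFA, NFA.accepts_eq_acceptsFrom_start, List.cons_append,
    NFA.cons_mem_acceptsFrom, start_toNFA, NFA.stepSet_singleton, step_none, if_pos rfl,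
    NFA.append_mem_acceptsFrom, hu, NFA.mem_acceptsFrom_iff_exists, not_iff_comm,
    Set.not_subset]
  simp only [Set.mem_image, exists_exists_and_eq_and]
  exact exists_congr fun s => and_congr_right fun _ => (Set.ext_iff.1 hy s).symm

theorem exists_words_notMem_accepts_iff (n : ℕ) [NeZero n] :
    ∃ x y : Set (ZMod n) → List (Fin 3),
      ∀ S T, x S ++ y T ∉ (cycleNFA n).accepts ↔ S ⊆ T := by
  choose u hu using cycleClosed_reachable.forall_set (n := n)
  choose y hy using fun T : Set (ZMod n) => cycleClosed_coreachable.forall_set (-Tᶜ)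
  refine ⟨fun S => 2 :: u S, y, fun S T => two_cons_append_notMem_accepts (hu S) ?_⟩
  rw [hy, neg_neg]

end cycleNFA

/-- **Complementation, lower bound.** For every `m ≥ 2` there is a suffix-free
regular language `L` over the alphabet `{a, b, c}` (encoded as `Fin 3`) such
that `NSC(L) ≤ m` while every NFA accepting the complement of `L` has at least
`2^(m-1) - 1` states. -/
theorem complement_lower (m : ℕ) (hm : 2 ≤ m) :
    ∃ L : Language (Fin 3), SuffixFree L ∧ NSCle L m ∧
      NSCge {w | w ∉ L} (2 ^ (m - 1) - 1) := by
  have : NeZero (m - 1) := ⟨by omega⟩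
  obtain ⟨x, y, hxy⟩ := cycleNFA.exists_words_notMem_accepts_iff (m - 1)
  refine ⟨(cycleNFA (m - 1)).accepts, cycleNFA.suffixFree_accepts,
    ⟨_, inferInstance, cycleNFA (m - 1), rfl, ?_⟩, ?_⟩
  · rw [Fintype.card_option, ZMod.card]
    omega
  · have hfool :
        NSCge {w | w ∉ (cycleNFA (m - 1)).accepts} (Fintype.card (Set (ZMod (m - 1)))) :=
      NSCge_of_fooling x y (fun S => (hxy S S).2 subset_rfl)
        fun S T hST hTS => ((hxy S T).1 hST).antisymm ((hxy T S).1 hTS)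
    rw [Fintype.card_set, ZMod.card] at hfool
    exact hfool.mono (Nat.sub_le _ _)
end
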